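/- arXiv:1807.02005 — 2 statements merged into one kernel-verified Lean document; each statement's English description precedes it below -/
import Mathlib

section
/- Let g be a finite-dimensional complex Lie algebra, k an ideal of g with a direct complement g' (so g = k ⊕ g' as Lie algebras), and M a simple g-module with locally finite k-action. Write M ≅ M_k ⊗ M' where M_k is a simple finite-dimensional k-module and M' = Hom_k(M_k, M). Then M' is a simple g'-module. -/
/-!
The values `φ m` of the maps `φ` in a `g'`-invariant subspace `S ⊆ M'` span a subspace of `M`
that is stable under `k`, because each `φ` is `k`-linear, and under `g'`, by the invariance of `S`
(`g'` commutes with `k`, so `y ∈ g'` acts on `M'`). It is therefore a `g`-submodule of `M`, hence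
`0` or `M`. In the first case `S = 0`. In the second, injectivity of the evaluation
`Mk ⊗ M' → M` forces `Mk ⊗ S = Mk ⊗ M'`, and contracting `m₀ ⊗ ψ` with a functional `f`
satisfying `f m₀ = 1` shows `ψ ∈ S`.
-/

theorem LieIdeal.lie_eq_zero_of_inf_eq_bot {R L : Type*} [CommRing R] [LieRing L] [LieAlgebra R L]
    {I J : LieIdeal R L} (h : I ⊓ J = ⊥) {x y : L} (hx : x ∈ I) (hy : y ∈ J) : ⁅x, y⁆ = 0 := by
  have := LieSubmodule.lie_le_inf I J (LieSubmodule.lie_mem_lie hx hy)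
  rwa [h, LieSubmodule.mem_bot] at this

theorem LieSubmodule.span_eq_bot_or_eq_top_of_forall_lie_mem {R L M : Type*} [CommRing R]
    [LieRing L] [LieAlgebra R L] [AddCommGroup M] [Module R M] [LieRingModule L M]
    [LieModule R L M] [LieModule.IsIrreducible R L M] {s : Set M}
    (h : ∀ (x : L), ∀ n ∈ s, ⁅x, n⁆ ∈ Submodule.span R s) :
    Submodule.span R s = ⊥ ∨ Submodule.span R s = ⊤ := by
  let N : LieSubmodule R L M :=
    { Submodule.span R s with
      lie_mem := fun {x n} hn => by
        induction hn using Submodule.span_induction with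
        | mem n hn => exact h x n hn
        | zero => simp
        | add a b _ _ ha hb => rw [lie_add]; exact Submodule.add_mem _ ha hb
        | smul c a _ ha => rw [lie_smul]; exact Submodule.smul_mem _ c ha }
  rcases eq_bot_or_eq_top N with hN | hN
  · exact Or.inl (congrArg LieSubmodule.toSubmodule hN)
  · exact Or.inr (congrArg LieSubmodule.toSubmodule hN)

section
variable {K V W : Type*} [Field K] [AddCommGroup V] [Module K V] [AddCommGroup W] [Module K W]

theorem Submodule.mem_of_tmul_mem_range_lTensor (S : Submodule K W) {v : V} (hv : v ≠ 0) {w : W}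
    (h : v ⊗ₜ w ∈ LinearMap.range (S.subtype.lTensor V)) : w ∈ S := by
  obtain ⟨f, hf⟩ := Module.Projective.exists_dual_eq_one K hv
  obtain ⟨t, ht⟩ := h
  have key : (TensorProduct.lid K W ∘ₗ f.rTensor W) ∘ₗ S.subtype.lTensor V =
      S.subtype ∘ₗ TensorProduct.lid K S ∘ₗ f.rTensor S := by
    ext a b
    simp
  have := LinearMap.congr_fun key t
  simp only [LinearMap.comp_apply, ht, LinearMap.rTensor_tmul, LinearEquiv.coe_coe,
    TensorProduct.lid_tmul, hf, one_smul] at this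
  exact this ▸ Submodule.coe_mem _

end

section
variable {K V H M : Type*} [Field K] [AddCommGroup V] [Module K V] [AddCommGroup H] [Module K H]
  [AddCommGroup M] [Module K M]

theorem Submodule.eq_top_of_span_apply_eq_top_of_lift_injective [Nontrivial V]
    {B : V →ₗ[K] H →ₗ[K] M} (hB : Function.Injective (TensorProduct.lift B)) (S : Submodule K H)
    (hS : Submodule.span K {n | ∃ φ ∈ S, ∃ v, B v φ = n} = ⊤) : S = ⊤ := by
  have hrange : LinearMap.range (TensorProduct.lift B ∘ₗ S.subtype.lTensor V) = ⊤ := by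
    rw [eq_top_iff, ← hS, Submodule.span_le]
    rintro _ ⟨φ, hφ, v, rfl⟩
    exact ⟨v ⊗ₜ ⟨φ, hφ⟩, by simp⟩
  obtain ⟨v, hv⟩ := exists_ne (0 : V)
  refine eq_top_iff.2 fun ψ _ => S.mem_of_tmul_mem_range_lTensor hv ?_
  obtain ⟨t, ht⟩ : TensorProduct.lift B (v ⊗ₜ ψ) ∈ LinearMap.range _ := hrange ▸ Submodule.mem_top
  exact ⟨t, hB ht⟩

end

section
variable {R L M V : Type*} [CommRing R] [LieRing L] [LieAlgebra R L] [AddCommGroup M] [Module R M]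
  [LieRingModule L M] [LieModule R L M] {k : LieIdeal R L}

def LieModule.toEndOfCommute (y : L) (hy : ∀ x ∈ k, ⁅x, y⁆ = 0) : M →ₗ⁅R, k⁆ M where
  toLinearMap := LieModule.toEnd R L M y
  map_lie' {x m} := by
    have := lie_lie (x : L) y m
    rw [hy x x.2, zero_lie, eq_comm, sub_eq_zero] at this
    simpa [LieIdeal.coe_bracket_of_module] using this.symm

variable [AddCommGroup V] [Module R V] [LieRingModule k V]

theorem LieIdeal.lie_mem_span_apply_of_sup_eq_top_of_inf_eq_bot {g' : LieIdeal R L}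
    (hsup : k ⊔ g' = ⊤) (hinf : k ⊓ g' = ⊥) {S : Set (V →ₗ⁅R,k⁆ M)}
    (hS : ∀ y : L, y ∈ g' → ∀ φ ∈ S, ∀ ψ : V →ₗ⁅R,k⁆ M, (∀ m : V, ψ m = ⁅y, φ m⁆) → ψ ∈ S)
    (x : L) :
    ∀ n ∈ {n | ∃ φ ∈ S, ∃ m, φ m = n}, ⁅x, n⁆ ∈ Submodule.span R {n | ∃ φ ∈ S, ∃ m, φ m = n} := by
  rintro _ ⟨φ, hφ, m, rfl⟩
  obtain ⟨a, ha, b, hb, rfl⟩ := (LieSubmodule.mem_sup _ _ _).mp (hsup ▸ LieSubmodule.mem_top x)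
  have hk : ⁅a, φ m⁆ = φ ⁅(⟨a, ha⟩ : k), m⁆ := by rw [φ.map_lie, LieIdeal.coe_bracket_of_module]
  have hb_comm : ∀ x ∈ k, ⁅x, b⁆ = 0 := fun x hx => LieIdeal.lie_eq_zero_of_inf_eq_bot hinf hx hb
  have hg' : (LieModule.toEndOfCommute b hb_comm).comp φ ∈ S := hS b hb φ hφ _ fun _ => rfl
  rw [add_lie, hk]
  exact Submodule.add_mem _ (Submodule.subset_span ⟨φ, hφ, _, rfl⟩)
    (Submodule.subset_span ⟨_, hg', m, rfl⟩)

end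

theorem hom_space_is_simple_over_complement_general
    (L : Type*) [LieRing L] [LieAlgebra ℂ L]
    (k g' : LieIdeal ℂ L) (hsup : k ⊔ g' = ⊤) (hinf : k ⊓ g' = ⊥)
    (M : Type*) [AddCommGroup M] [Module ℂ M] [LieRingModule L M] [LieModule ℂ L M]
    [LieModule.IsIrreducible ℂ L M]
    (Mk : LieSubmodule ℂ (↥k) M) [LieModule.IsIrreducible ℂ (↥k) (↥Mk)]
    (hev : Function.Bijective
      (TensorProduct.lift
        (LinearMap.mk₂ ℂ (fun (m : ↥Mk) (φ : (↥Mk) →ₗ⁅ℂ,↥k⁆ M) => φ m)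
          (fun m₁ m₂ φ => φ.map_add m₁ m₂)
          (fun c m φ => φ.map_smul c m)
          (fun m φ₁ φ₂ => rfl)
          (fun c m φ => rfl)))) :
    Nontrivial ((↥Mk) →ₗ⁅ℂ,↥k⁆ M) ∧
    ∀ S : Submodule ℂ ((↥Mk) →ₗ⁅ℂ,↥k⁆ M),
      (∀ y : L, y ∈ g' → ∀ φ ∈ S, ∀ ψ : (↥Mk) →ₗ⁅ℂ,↥k⁆ M,
        (∀ m : ↥Mk, ψ m = ⁅y, φ m⁆) → ψ ∈ S) →
      S = ⊥ ∨ S = ⊤ := by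
  have := LieModule.nontrivial_of_isIrreducible ℂ k Mk
  obtain ⟨m₀, hm₀⟩ := exists_ne (0 : Mk)
  refine ⟨nontrivial_of_ne Mk.incl 0 fun h => hm₀ (Subtype.ext (LieModuleHom.congr_fun h m₀)),
    fun S hS => ?_⟩
  rcases LieSubmodule.span_eq_bot_or_eq_top_of_forall_lie_mem
      (LieIdeal.lie_mem_span_apply_of_sup_eq_top_of_inf_eq_bot hsup hinf hS) with h | h
  · refine Or.inl ((Submodule.eq_bot_iff S).2 fun φ hφ => LieModuleHom.ext fun m => ?_)
    exact (Submodule.span_eq_bot.1 h) _ ⟨φ, hφ, m, rfl⟩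
  · exact Or.inr (S.eq_top_of_span_apply_eq_top_of_lift_injective hev.injective
      (by simpa using h))

/-- Let `g` be a finite-dimensional complex Lie algebra which is a direct sum of two
ideals `k` and `g'`, and let `M` be a simple `g`-module with locally finite `k`-action.
Write `M ≅ Mk ⊗ M'` where `Mk` is a simple finite-dimensional `k`-submodule of `M` and
`M' = Hom_k(Mk, M)` (expressed by the hypothesis that the evaluation map is bijective).
Then `M'` is a simple `g'`-module, where `y ∈ g'` acts on `φ ∈ M'` by
`(y · φ) m = ⁅y, φ m⁆`: it is nontrivial, and any subspace invariant under this
action is `⊥` or `⊤`. -/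
theorem hom_space_is_simple_over_complement
    (L : Type*) [LieRing L] [LieAlgebra ℂ L] [FiniteDimensional ℂ L]
    (k g' : LieIdeal ℂ L) (hsup : k ⊔ g' = ⊤) (hinf : k ⊓ g' = ⊥)
    (M : Type*) [AddCommGroup M] [Module ℂ M] [LieRingModule L M] [LieModule ℂ L M]
    [LieModule.IsIrreducible ℂ L M]
    (hlf : ∀ m : M, FiniteDimensional ℂ (LieSubmodule.lieSpan ℂ (↥k) {m}))
    (Mk : LieSubmodule ℂ (↥k) M) [LieModule.IsIrreducible ℂ (↥k) (↥Mk)]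
    [FiniteDimensional ℂ (↥Mk)]
    (hev : Function.Bijective
      (TensorProduct.lift
        (LinearMap.mk₂ ℂ (fun (m : ↥Mk) (φ : (↥Mk) →ₗ⁅ℂ,↥k⁆ M) => φ m)
          (fun m₁ m₂ φ => φ.map_add m₁ m₂)
          (fun c m φ => φ.map_smul c m)
          (fun m φ₁ φ₂ => rfl)
          (fun c m φ => rfl)))) :
    Nontrivial ((↥Mk) →ₗ⁅ℂ,↥k⁆ M) ∧
    ∀ S : Submodule ℂ ((↥Mk) →ₗ⁅ℂ,↥k⁆ M),
      (∀ y : L, y ∈ g' → ∀ φ ∈ S, ∀ ψ : (↥Mk) →ₗ⁅ℂ,↥k⁆ M,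
        (∀ m : ↥Mk, ψ m = ⁅y, φ m⁆) → ψ ∈ S) →
      S = ⊥ ∨ S = ⊤ :=
  hom_space_is_simple_over_complement_general L k g' hsup hinf M Mk hev
end

section
/- Let g be a finite-dimensional reductive complex Lie algebra and k an ideal of g. Then every simple admissible (g,k)-module M is finite-dimensional. (A (g,k)-module is a g-module with locally finite k-action; it is admissible if its restriction to k is a direct sum of simple finite-dimensional k-modules, each occurring with finite multiplicity.) -/
/-!
Choose an ideal `J` complementary to `k`. Since `⁅k, J⁆ ⊆ k ⊓ J = 0`, every `z ∈ J` acts on `M`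
by an endomorphism of `k`-modules. Such an endomorphism maps a copy of a simple `k`-module
`Mk` either to zero or isomorphically onto another copy, so it preserves the isotypic component
of `Mk`. That component is therefore stable under `k ⊔ J = L`, i.e. a nonzero `L`-submodule; by
simplicity it is all of `M`, and by admissibility it is finite-dimensional.
-/

namespace LieSubmodule

variable {R K M : Type*} [CommRing R] [LieRing K] [AddCommGroup M] [Module R M] [LieRingModule K M]

def isotypicComponent (N : LieSubmodule R K M) : LieSubmodule R K M :=
  sSup {N' : LieSubmodule R K M | Nonempty (N' ≃ₗ⁅R,K⁆ N)}

lemma le_isotypicComponent (N : LieSubmodule R K M) : N ≤ N.isotypicComponent :=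
  le_sSup ⟨LieModuleEquiv.refl⟩

lemma map_le_isotypicComponent_of_equiv {N N' : LieSubmodule R K M}
    [LieModule.IsIrreducible R K N] (e : N' ≃ₗ⁅R,K⁆ N) (f : M →ₗ⁅R,K⁆ M) :
    N'.map f ≤ N.isotypicComponent := by
  have : LieModule.IsIrreducible R K N' := (orderIsoMapComap e).isSimpleOrder
  set g := f.comp N'.incl
  have hmap : (⊤ : LieSubmodule R K N').map g = N'.map f := by
    rw [map_comp, map_incl_top]
  rw [← hmap]
  rcases eq_bot_or_eq_top g.ker with hker | hker
  · have hg : Function.Injective g := (LieModuleHom.ker_eq_bot g).mp hker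
    exact le_sSup ⟨(equivMapOfInjective (f := g) ⊤ hg).symm.trans
      ((LieModuleEquiv.ofTop R K N').trans e)⟩
  · exact (map_le_iff_le_comap.mpr hker.ge).trans bot_le

lemma map_isotypicComponent_le {N : LieSubmodule R K M} [LieModule.IsIrreducible R K N]
    (f : M →ₗ⁅R,K⁆ M) : N.isotypicComponent.map f ≤ N.isotypicComponent :=
  map_le_iff_le_comap.mpr <| sSup_le fun _ ⟨e⟩ ↦
    map_le_iff_le_comap.mp (map_le_isotypicComponent_of_equiv e f)

end LieSubmodule

namespace LieIdeal

variable {R L M : Type*} [CommRing R] [LieRing L] [LieAlgebra R L]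
  [AddCommGroup M] [Module R M] [LieRingModule L M] [LieModule R L M]

lemma lie_eq_zero_of_disjoint {I J : LieIdeal R L} (h : Disjoint I J) {x y : L}
    (hx : x ∈ I) (hy : y ∈ J) : ⁅x, y⁆ = 0 := by
  have := LieSubmodule.lie_le_inf I J (LieSubmodule.lie_mem_lie hx hy)
  rwa [h.eq_bot, LieSubmodule.mem_bot] at this

def toEndOfCommute (k : LieIdeal R L) {z : L} (hz : ∀ x ∈ k, ⁅x, z⁆ = 0) :
    M →ₗ⁅R,k⁆ M where
  __ := LieModule.toEnd R L M z
  map_lie' {x m} := by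
    change ⁅z, ⁅(x : L), m⁆⁆ = ⁅(x : L), ⁅z, m⁆⁆
    rw [leibniz_lie (x : L) z m, hz x x.2, zero_lie, zero_add]

omit [LieModule R L M] in
lemma exists_lieSubmodule_toSubmodule_eq {k J : LieIdeal R L} (hkJ : k ⊔ J = ⊤)
    (N : LieSubmodule R k M) (hJ : ∀ z ∈ J, ∀ m ∈ N, ⁅z, m⁆ ∈ N) :
    ∃ N' : LieSubmodule R L M, (N' : Submodule R M) = N := by
  refine ⟨{ (N : Submodule R M) with lie_mem := fun {x m} hm ↦ ?_ }, rfl⟩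
  obtain ⟨y, hy, z, hz, rfl⟩ := LieSubmodule.mem_sup _ _ x |>.mp (hkJ ▸ LieSubmodule.mem_top x)
  rw [add_lie]
  exact add_mem (N.lie_mem (x := ⟨y, hy⟩) hm) (hJ z hz m hm)

lemma exists_lieSubmodule_toSubmodule_eq_isotypicComponent {k J : LieIdeal R L}
    (hkJ : IsCompl k J) (N : LieSubmodule R k M) [LieModule.IsIrreducible R k N] :
    ∃ N' : LieSubmodule R L M, (N' : Submodule R M) = N.isotypicComponent := by
  refine exists_lieSubmodule_toSubmodule_eq hkJ.sup_eq_top _ fun z hz m hm ↦ ?_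
  have hcomm : ∀ x ∈ k, ⁅x, z⁆ = 0 := fun x hx ↦ lie_eq_zero_of_disjoint hkJ.disjoint hx hz
  exact LieSubmodule.map_isotypicComponent_le (toEndOfCommute k hcomm)
    (LieSubmodule.mem_map_of_mem hm)

end LieIdeal

theorem simple_admissible_module_over_ideal_is_finite_dimensional_general
    (L : Type*) [LieRing L] [LieAlgebra ℂ L]
    (hred : ∀ I : LieIdeal ℂ L, ∃ J : LieIdeal ℂ L, IsCompl I J)
    (k : LieIdeal ℂ L)
    (M : Type*) [AddCommGroup M] [Module ℂ M] [LieRingModule L M] [LieModule ℂ L M]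
    [LieModule.IsIrreducible ℂ L M]
    (hss : sSup {N : LieSubmodule ℂ (↥k) M |
        LieModule.IsIrreducible ℂ (↥k) (↥N) ∧ FiniteDimensional ℂ (↥N)} = ⊤)
    (hadm : ∀ Mk : LieSubmodule ℂ (↥k) M,
      LieModule.IsIrreducible ℂ (↥k) (↥Mk) → FiniteDimensional ℂ (↥Mk) →
      FiniteDimensional ℂ
        (↥(sSup {N : LieSubmodule ℂ (↥k) M | Nonempty ((↥N) ≃ₗ⁅ℂ,↥k⁆ (↥Mk))}))) :
    FiniteDimensional ℂ M := by
  obtain ⟨J, hJ⟩ := hred k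
  have : Nontrivial M := LieModule.nontrivial_of_isIrreducible ℂ L M
  obtain ⟨Mk, hMk, hMkfin⟩ : {N : LieSubmodule ℂ k M |
      LieModule.IsIrreducible ℂ k N ∧ FiniteDimensional ℂ N}.Nonempty := by
    refine Set.nonempty_iff_ne_empty.mpr fun h ↦ ?_
    rw [h, sSup_empty] at hss
    exact bot_ne_top hss
  obtain ⟨S, hS⟩ := LieIdeal.exists_lieSubmodule_toSubmodule_eq_isotypicComponent hJ Mk
  have hMk_ne_bot : Mk ≠ ⊥ :=
    (LieSubmodule.nontrivial_iff_ne_bot ℂ k M).mp (LieModule.nontrivial_of_isIrreducible ℂ k Mk)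
  have hS_top : S = ⊤ := (eq_bot_or_eq_top S).resolve_left fun hS_bot ↦
    ne_bot_of_le_ne_bot hMk_ne_bot Mk.le_isotypicComponent <| by
      rw [← LieSubmodule.toSubmodule_eq_bot, ← hS, hS_bot, LieSubmodule.bot_toSubmodule]
  have hfin : FiniteDimensional ℂ Mk.isotypicComponent := hadm Mk hMk hMkfin
  change Module.Finite ℂ M
  rw [Module.finite_def, ← LieSubmodule.top_toSubmodule (R := ℂ) (L := L), ← hS_top, hS]
  exact Module.Finite.iff_fg.mp hfin

/-- Let `g` be a finite-dimensional reductive complex Lie algebra (every ideal has a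
complementary ideal) and `k` an ideal of `g`.  Then every simple admissible
`(g,k)`-module `M` is finite-dimensional.  Here `M` is a `(g,k)`-module if `k` acts
locally finitely on `M`; it is admissible if, as a `k`-module, it is a direct sum of
simple finite-dimensional `k`-modules (the sum of all such submodules is everything)
with finite multiplicities (every isotypic component is finite-dimensional). -/
theorem simple_admissible_module_over_ideal_is_finite_dimensional
    (L : Type*) [LieRing L] [LieAlgebra ℂ L] [FiniteDimensional ℂ L]
    (hred : ∀ I : LieIdeal ℂ L, ∃ J : LieIdeal ℂ L, IsCompl I J)
    (k : LieIdeal ℂ L)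
    (M : Type*) [AddCommGroup M] [Module ℂ M] [LieRingModule L M] [LieModule ℂ L M]
    [LieModule.IsIrreducible ℂ L M]
    (hlf : ∀ m : M, FiniteDimensional ℂ (LieSubmodule.lieSpan ℂ (↥k) {m}))
    (hss : sSup {N : LieSubmodule ℂ (↥k) M |
        LieModule.IsIrreducible ℂ (↥k) (↥N) ∧ FiniteDimensional ℂ (↥N)} = ⊤)
    (hadm : ∀ Mk : LieSubmodule ℂ (↥k) M,
      LieModule.IsIrreducible ℂ (↥k) (↥Mk) → FiniteDimensional ℂ (↥Mk) →
      FiniteDimensional ℂ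
        (↥(sSup {N : LieSubmodule ℂ (↥k) M | Nonempty ((↥N) ≃ₗ⁅ℂ,↥k⁆ (↥Mk))}))) :
    FiniteDimensional ℂ M :=
  simple_admissible_module_over_ideal_is_finite_dimensional_general L hred k M hss hadm
end
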